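/- arXiv:1703.00107 — 5 statements merged into one kernel-verified Lean document; each statement's English description precedes it below -/
import Mathlib

section
/- Every infinite commutative ring R with identity is 2-rigid: every R-linear map from R² to R has infinite kernel. -/
/-!
Write `a = f e₀` and `b = f e₁`. The syzygy `t ↦ (t b, -t a)` maps `R` into `ker f`, and its own
kernel, the common annihilator of `a` and `b`, embeds into `ker f` via `t ↦ (t, 0)`. An additive
map out of the infinite group `R` has an infinite kernel or an infinite image, so either way
`ker f` is infinite.
-/

theorem LinearMap.infinite_ker_or_infinite_range {R M N : Type*} [Ring R] [AddCommGroup M]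
    [AddCommGroup N] [Module R M] [Module R N] [Infinite M] (g : M →ₗ[R] N) :
    (LinearMap.ker g : Set M).Infinite ∨ (LinearMap.range g : Set N).Infinite := by
  by_contra! ⟨hker, hrange⟩
  have : Finite M := g.toAddMonoidHom.finite_iff_finite_ker_range.2
    ⟨by rw [← LinearMap.ker_toAddSubgroup]; exact hker.to_subtype,
     by rw [← LinearMap.range_toAddSubgroup]; exact hrange.to_subtype⟩
  exact not_finite M

namespace LinearMap

variable {R : Type*} [CommRing R] (f : (Fin 2 → R) →ₗ[R] R)

theorem apply_fin_two (x : Fin 2 → R) :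
    f x = x 0 * f (Pi.single 0 1) + x 1 * f (Pi.single 1 1) := by
  rw [f.pi_apply_eq_sum_univ x, Fin.sum_univ_two]
  simp only [smul_eq_mul, eq_comm (a := (0 : Fin 2)), eq_comm (a := (1 : Fin 2)),
    ← Pi.single_apply]

def syzygy : R →ₗ[R] (Fin 2 → R) :=
  toSpanSingleton R _ ![f (Pi.single 1 1), -f (Pi.single 0 1)]

theorem range_syzygy_le_ker : range (syzygy f) ≤ ker f := by
  rintro _ ⟨t, rfl⟩
  rw [mem_ker, apply_fin_two]
  simp only [syzygy, toSpanSingleton_apply, Pi.smul_apply, Matrix.cons_val_zero,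
    Matrix.cons_val_one, smul_eq_mul]
  ring

theorem single_mem_ker_of_mem_ker_syzygy {t : R} (ht : t ∈ ker (syzygy f)) :
    Pi.single 0 t ∈ ker f := by
  have hta : t * -f (Pi.single 0 1) = 0 := congrFun ht 1
  rw [mem_ker, apply_fin_two]
  simpa using hta

end LinearMap

/-- Every infinite commutative ring `R` with identity is `2`-rigid:
every `R`-linear map `R² → R` has infinite kernel. -/
theorem infinite_commRing_two_rigid (R : Type*) [CommRing R] [Infinite R]
    (f : (Fin 2 → R) →ₗ[R] R) :
    (LinearMap.ker f : Set (Fin 2 → R)).Infinite := by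
  rcases (LinearMap.syzygy f).infinite_ker_or_infinite_range with hker | hrange
  · have : Infinite (LinearMap.ker (LinearMap.syzygy f)) := hker.to_subtype
    exact Set.infinite_of_injective_forall_mem
      ((Pi.single_injective 0).comp Subtype.val_injective)
      fun t => f.single_mem_ker_of_mem_ker_syzygy t.2
  · exact hrange.mono f.range_syzygy_le_ker
end

section
/- If a ring R is n-rigid, then R is (n-1)-rigid. -/
/-- A ring `R` is `n`-rigid if every homomorphism of right `R`-modules
`Rⁿ → Rⁿ⁻¹` has infinite kernel.  Right `R`-modules are treated as
left `Rᵐᵒᵖ`-modules. -/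
def IsRigid (R : Type*) [Ring R] (n : ℕ) : Prop :=
  ∀ f : (Fin n → R) →ₗ[Rᵐᵒᵖ] (Fin (n - 1) → R),
    (LinearMap.ker f : Set (Fin n → R)).Infinite

/-- If a ring `R` is `n`-rigid, then `R` is `(n-1)`-rigid. -/
theorem isRigid_of_isRigid_succ (R : Type*) [Ring R] (n : ℕ) (hn : 2 ≤ n)
    (h : IsRigid R n) : IsRigid R (n - 1) := by
  intro f
  have hmn : n - 1 ≤ n := Nat.sub_le _ _
  let restrict : (Fin n → R) →ₗ[Rᵐᵒᵖ] (Fin (n - 1) → R) :=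
    LinearMap.funLeft Rᵐᵒᵖ R (Fin.castLE hmn)
  let f' : (Fin n → R) →ₗ[Rᵐᵒᵖ] (Fin (n - 1 - 1) → R) := f ∘ₗ restrict
  let g : (Fin n → R) →ₗ[Rᵐᵒᵖ] (Fin (n - 1) → R) := LinearMap.pi (fun i =>
    if hi : (i : ℕ) < n - 1 - 1 then (LinearMap.proj (⟨i, hi⟩ : Fin (n - 1 - 1))) ∘ₗ f'
    else LinearMap.proj (⟨n - 1, by omega⟩ : Fin n))
  have hg : (LinearMap.ker g : Set (Fin n → R)).Infinite := h g
  haveI : Infinite (LinearMap.ker g) := Set.infinite_coe_iff.mpr hg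
  -- every element of ker g gives an element of ker f
  have key : ∀ x : Fin n → R, g x = 0 → f (restrict x) = 0 := by
    intro x hx
    funext j
    have hj : (j : ℕ) < n - 1 - 1 := j.isLt
    have : g x ⟨j, by omega⟩ = 0 := by rw [hx]; rfl
    simpa [g, LinearMap.pi_apply, dif_pos hj, f', Fin.eta] using this
  have last0 : ∀ x : Fin n → R, g x = 0 → x ⟨n - 1, by omega⟩ = 0 := by
    intro x hx
    have hml : ¬ ((n - 1 - 1 : ℕ) < n - 1 - 1) := lt_irrefl _
    have : g x ⟨n - 1 - 1, by omega⟩ = 0 := by rw [hx]; rfl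
    simpa [g, LinearMap.pi_apply, dif_neg hml] using this
  let φ : LinearMap.ker g → LinearMap.ker f := fun x =>
    ⟨restrict x.1, by
      have := key x.1 (LinearMap.mem_ker.mp x.2)
      exact LinearMap.mem_ker.mpr this⟩
  have hinj : Function.Injective φ := by
    intro x y hxy
    have hxy' : restrict x.1 = restrict y.1 := congrArg Subtype.val hxy
    ext k
    by_cases hk : (k : ℕ) < n - 1
    · have := congrFun hxy' ⟨k, hk⟩
      simpa [restrict, LinearMap.funLeft, Fin.castLE] using this
    · have hk' : k = ⟨n - 1, by omega⟩ := by
        apply Fin.ext; simp only []; omega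
      rw [hk', last0 x.1 (LinearMap.mem_ker.mp x.2),
        last0 y.1 (LinearMap.mem_ker.mp y.2)]
  apply Set.infinite_of_injective_forall_mem
    (f := fun a : LinearMap.ker g => ((φ a : Fin (n - 1) → R)))
  · exact fun x y hxy => hinj (Subtype.ext hxy)
  · intro a
    exact (φ a).2
end

section
/- If R is n-rigid for every n ≥ 1 and A is an associative ring that is a free R-module of finite positive rank (a finite-dimensional R-algebra), then A is n-rigid for every n ≥ 1. -/
open Module

theorem IsRigid.infinite {R : Type*} [Ring R] {n : ℕ} (h : IsRigid R n) : Infinite R :=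
  not_finite_iff_infinite.mp fun _ => h 0 (Set.toFinite _)

/-- Over a commutative ring, right and left modules agree. -/
theorem IsRigid.infinite_ker {R : Type*} [CommRing R] {n : ℕ} (h : IsRigid R n)
    (f : (Fin n → R) →ₗ[R] (Fin (n - 1) → R)) : (LinearMap.ker f : Set (Fin n → R)).Infinite :=
  h (f.restrictScalars Rᵐᵒᵖ)

theorem LinearMap.infinite_ker_of_isRigid {R M N : Type*} [CommRing R]
    [AddCommGroup M] [Module R M] [Module.Free R M] [Module.Finite R M]
    [AddCommGroup N] [Module R N] [Module.Free R N] [Module.Finite R N]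
    {m : ℕ} (hR : IsRigid R m) (hM : finrank R M = m) (hN : finrank R N < m) (g : M →ₗ[R] N) :
    (LinearMap.ker g : Set M).Infinite := by
  -- an infinite ring is nontrivial, so commutativity gives the strong rank condition
  have : Infinite R := hR.infinite
  obtain ⟨e⟩ : Nonempty (M ≃ₗ[R] (Fin m → R)) :=
    FiniteDimensional.nonempty_linearEquiv_of_finrank_eq (by simp [hM])
  obtain ⟨i, hi⟩ : ∃ i : N →ₗ[R] (Fin (m - 1) → R), Function.Injective i :=
    finrank_le_iff_exists_linearMap.mp (by simp only [finrank_fin_fun]; omega)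
  have hker : (LinearMap.ker (i ∘ₗ g ∘ₗ e.symm.toLinearMap) : Set (Fin m → R)) =
      e.symm ⁻¹' LinearMap.ker g := by
    rw [LinearMap.ker_comp_of_ker_eq_bot _ (LinearMap.ker_eq_bot.mpr hi), LinearMap.ker_comp]
    rfl
  have := hR.infinite_ker (i ∘ₗ g ∘ₗ e.symm.toLinearMap)
  rw [hker] at this
  exact fun hfin => this (hfin.preimage e.symm.injective.injOn)

/-- If `R` is `n`-rigid for every `n ≥ 1` and `A` is an associative
ring which is a free `R`-module of finite positive rank (a finite-dimensional
`R`-algebra), then `A` is `n`-rigid for every `n ≥ 1`. -/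
theorem isRigid_of_finite_free_algebra (R A : Type*) [CommRing R] [Ring A]
    [Algebra R A] [Module.Free R A] [Module.Finite R A]
    (hrank : 0 < Module.finrank R A)
    (hR : ∀ n : ℕ, 1 ≤ n → IsRigid R n) :
    ∀ n : ℕ, 1 ≤ n → IsRigid A n := by
  intro n hn f
  have : Infinite R := (hR 1 le_rfl).infinite
  have hlt : (n - 1) * finrank R A < n * finrank R A :=
    Nat.mul_lt_mul_of_pos_right (by omega) hrank
  exact (f.restrictScalars R).infinite_ker_of_isRigid (hR _ (Nat.mul_pos hn hrank))
    (by simp [finrank_pi_fintype]) (by simpa [finrank_pi_fintype] using hlt)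
end

section
/- A size-balanced infinite noetherian ring is n-rigid for every positive integer n. -/
/-- A ring `R` is size-balanced if every finite right ideal of `R` generates a
finite two-sided ideal.  Right ideals are `Rᵐᵒᵖ`-submodules of `R`. -/
def SizeBalanced (R : Type*) [Ring R] : Prop :=
  ∀ I : Submodule Rᵐᵒᵖ R, (I : Set R).Finite →
    (TwoSidedIdeal.span (I : Set R) : Set R).Finite

/-!
Suppose `f : Rⁿ → Rⁿ⁻¹` has finite kernel. Since `R` is right noetherian, there is a maximal
finite two-sided ideal `J`. The vectors that `f` sends into `Jⁿ⁻¹` form a finite right submodule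
`L ⊇ Jⁿ`, so by size-balance the coordinates of `L` lie in a finite two-sided ideal, which is `J`
by maximality: `f⁻¹(Jⁿ⁻¹) = Jⁿ`. Thus `f` induces an injection `(R/J)ⁿ → (R/J)ⁿ⁻¹` of noetherian
right modules, which by Orzech's theorem forces `R/J = 0`, absurd as `J` is finite and `R` is not.
-/

open Function

theorem LinearMap.finite_preimage_of_finite_ker {R M N : Type*} [Semiring R] [AddCommGroup M]
    [AddCommGroup N] [Module R M] [Module R N] (f : M →ₗ[R] N)
    (hf : (LinearMap.ker f : Set M).Finite) {s : Set N} (hs : s.Finite) : (f ⁻¹' s).Finite := by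
  refine hs.preimage' fun b _ => ?_
  rcases (f ⁻¹' {b}).eq_empty_or_nonempty with h | ⟨a, ha⟩
  · simp [h]
  · refine (hf.image (a + ·)).subset fun x hx => ⟨x - a, ?_, add_sub_cancel a x⟩
    simp_all

theorem Submodule.finite_coe_iSup {R M ι : Type*} [Semiring R] [AddCommMonoid M] [Module R M]
    [Fintype ι] (p : ι → Submodule R M) (hp : ∀ i, (p i : Set M).Finite) :
    ((⨆ i, p i : Submodule R M) : Set M).Finite := by
  have : ∀ i, Finite (p i) := fun i => (hp i).to_subtype
  refine (Set.finite_range fun μ : ∀ i, p i => ∑ i, (μ i : M)).subset fun a ha => ?_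
  simpa [← Submodule.mem_iSup_finset_iff_exists_sum] using ha

namespace TwoSidedIdeal

variable {R : Type*} [Ring R]

def asRightIdeal : TwoSidedIdeal R ↪o Submodule Rᵐᵒᵖ R :=
  OrderEmbedding.ofMapLEIff
    (fun T =>
      { carrier := T
        add_mem' := T.add_mem
        zero_mem' := T.zero_mem
        smul_mem' := fun c _ hx => T.mul_mem_right _ c.unop hx })
    fun _ _ => Iff.rfl

@[simp]
theorem mem_asRightIdeal {T : TwoSidedIdeal R} {x : R} : x ∈ asRightIdeal T ↔ x ∈ T := Iff.rfl

instance [IsNoetherian Rᵐᵒᵖ R] : WellFoundedGT (TwoSidedIdeal R) :=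
  asRightIdeal.wellFoundedGT

def pi (T : TwoSidedIdeal R) (ι : Type*) : Submodule Rᵐᵒᵖ (ι → R) :=
  Submodule.pi Set.univ fun _ => asRightIdeal T

@[simp]
theorem mem_pi {T : TwoSidedIdeal R} {ι : Type*} {v : ι → R} : v ∈ T.pi ι ↔ ∀ i, v i ∈ T := by
  simp [pi, Submodule.mem_pi]

theorem pi_mono {T T' : TwoSidedIdeal R} (ι : Type*) (h : T ≤ T') : T.pi ι ≤ T'.pi ι :=
  fun _ hv => mem_pi.2 fun i => h (mem_pi.1 hv i)

theorem le_of_pi_le {T T' : TwoSidedIdeal R} {ι : Type*} [Nonempty ι] (h : T.pi ι ≤ T'.pi ι) :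
    T ≤ T' := by
  classical
  intro r hr
  obtain ⟨i⟩ := ‹Nonempty ι›
  have hr' : Pi.single i r ∈ T.pi ι :=
    mem_pi.2 fun j => by rcases eq_or_ne j i with rfl | hj <;> simp [*, T.zero_mem]
  simpa using mem_pi.1 (h hr') i

theorem finite_pi {T : TwoSidedIdeal R} {ι : Type*} [Finite ι] (hT : (T : Set R).Finite) :
    (T.pi ι : Set (ι → R)).Finite := by
  rw [pi, Submodule.coe_pi]
  exact Set.Finite.pi fun _ => hT

theorem pi_le_comap_pi (T : TwoSidedIdeal R) {ι κ : Type*} [Fintype ι]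
    (f : (ι → R) →ₗ[Rᵐᵒᵖ] (κ → R)) : T.pi ι ≤ (T.pi κ).comap f := by
  classical
  intro v hv
  -- `f v = ∑ⱼ f(eⱼ) vⱼ`, and `T` absorbs the left factors `f(eⱼ)ᵢ`.
  have hv' : v = ∑ j, MulOpposite.op (v j) • Pi.single j 1 := by
    conv_lhs => rw [← Finset.univ_sum_single v]
    refine Finset.sum_congr rfl fun j _ => ?_
    ext i
    rcases eq_or_ne i j with rfl | h <;> simp [*]
  rw [Submodule.mem_comap, hv', map_sum]
  refine sum_mem fun j _ => ?_
  rw [map_smul]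
  exact mem_pi.2 fun i => T.mul_mem_left _ _ (mem_pi.1 hv j)

theorem eq_top_of_comap_pi_le [IsNoetherian Rᵐᵒᵖ R] {m n : ℕ} (hmn : m < n) (T : TwoSidedIdeal R)
    (f : (Fin n → R) →ₗ[Rᵐᵒᵖ] (Fin m → R))
    (h : (T.pi (Fin m)).comap f ≤ T.pi (Fin n)) : T = ⊤ := by
  -- `h` makes `f` induce an injection `Rⁿ/Tⁿ → Rᵐ/Tᵐ`; forgetting the last coordinates is a
  -- surjection between the same noetherian modules, so by Orzech's theorem it is injective too,
  -- although it kills the class of the basis vector `e`.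
  have hf : Injective ((T.pi (Fin n)).mapQ _ f (T.pi_le_comap_pi f)) := by
    rw [← LinearMap.ker_eq_bot, Submodule.ker_mapQ, eq_bot_iff, Submodule.map_le_iff_le_comap,
      Submodule.comap_bot, Submodule.ker_mkQ]
    exact h
  let restrict := LinearMap.funLeft Rᵐᵒᵖ R (Fin.castLE hmn.le)
  let g := (T.pi (Fin n)).mapQ (T.pi (Fin m)) restrict (T.pi_le_comap_pi restrict)
  have hg : Surjective g := by
    intro y
    obtain ⟨y, rfl⟩ := Submodule.mkQ_surjective _ y
    obtain ⟨x, rfl⟩ :=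
      LinearMap.funLeft_surjective_of_injective Rᵐᵒᵖ R _ (Fin.castLE_injective hmn.le) y
    exact ⟨Submodule.mkQ _ x, rfl⟩
  have hg_inj := IsNoetherian.injective_of_surjective_of_injective _ g hf hg
  let e : Fin n → R := Pi.single ⟨m, hmn⟩ 1
  have hge : g (Submodule.mkQ _ e) = g 0 := by
    have : restrict e = 0 := by
      ext i
      have hi : Fin.castLE hmn.le i ≠ ⟨m, hmn⟩ := Fin.ne_of_val_ne i.isLt.ne
      simp [restrict, e, LinearMap.funLeft_apply, hi]
    simp [g, this]
  have he : e ∈ T.pi (Fin n) := by simpa using hg_inj hge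
  exact T.eq_top (by simpa [e] using mem_pi.1 he ⟨m, hmn⟩)

end TwoSidedIdeal

open TwoSidedIdeal

theorem SizeBalanced.exists_finite_le_pi {R : Type*} [Ring R] (hsb : SizeBalanced R)
    {ι : Type*} [Fintype ι] (M : Submodule Rᵐᵒᵖ (ι → R)) (hM : (M : Set (ι → R)).Finite) :
    ∃ T : TwoSidedIdeal R, (T : Set R).Finite ∧ M ≤ T.pi ι := by
  let N := ⨆ i, M.map (LinearMap.proj i)
  refine ⟨span N, hsb N (Submodule.finite_coe_iSup _ fun i => ?_),
    fun v hv => mem_pi.2 fun i => ?_⟩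
  · rw [Submodule.map_coe]
    exact hM.image _
  · exact subset_span (Submodule.mem_iSup_of_mem i ⟨v, hv, rfl⟩)

/-- A size-balanced infinite (right) noetherian ring is
`n`-rigid for every positive integer `n`. -/
theorem sizeBalanced_noetherian_isRigid (R : Type*) [Ring R] [Infinite R]
    [IsNoetherian Rᵐᵒᵖ R] (hsb : SizeBalanced R) :
    ∀ n : ℕ, 1 ≤ n → IsRigid R n := by
  intro n hn f
  by_contra hker
  rw [Set.not_infinite] at hker
  obtain ⟨J, hJfin, hJmax⟩ :=
    exists_maximal_of_wellFoundedGT (fun T : TwoSidedIdeal R => (T : Set R).Finite) ⟨⊥, by simp⟩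
  obtain ⟨J', hJ'fin, hJ'⟩ := hsb.exists_finite_le_pi ((J.pi (Fin (n - 1))).comap f)
    (f.finite_preimage_of_finite_ker hker (finite_pi hJfin))
  have : Nonempty (Fin n) := ⟨⟨0, hn⟩⟩
  have hJ'J : J' ≤ J := hJmax hJ'fin (le_of_pi_le ((J.pi_le_comap_pi f).trans hJ'))
  have hJ : J = ⊤ := J.eq_top_of_comap_pi_le (by omega) f (hJ'.trans (pi_mono _ hJ'J))
  exact Set.infinite_univ (by simpa [hJ] using hJfin)
end

section
/- Let n ≥ 3, let R be an infinite (n-1)-rigid ring, let Q be the stabilizer of e₁ in E_n(R), and let g₁, ..., g_{n-2} ∈ E_n(R) with g_i e₁ = x_i e₁ + u_i where u_i lies in the span U of e₂,...,e_n. Let Φ = {φ ∈ Hom_R(U, R) : φ(u_i) = 0 for all i}, and for φ ∈ Φ let T_φ(v) = v + φ(p(v))e₁ where p : R^n → U is the projection. Then T = {T_φ : φ ∈ Φ} is a normal subgroup of Q ∩ g₁Qg₁⁻¹ ∩ ... ∩ g_{n-2}Qg_{n-2}⁻¹. -/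
variable (R : Type*) [Ring R] (n : ℕ)

/-- `E_n(R)`: the subgroup of `GL_n(R)` generated by the elementary matrices
`e_{ij}(r) = I_n + r·E_{ij}`, `i ≠ j`, `r ∈ R`. -/
def ElemGroup : Subgroup (Matrix (Fin n) (Fin n) R)ˣ :=
  Subgroup.closure {g | ∃ i j : Fin n, ∃ r : R, i ≠ j ∧
    g.val = 1 + Matrix.single i j r}

/-- The first standard basis (column) vector `e₁` of `Rⁿ`. -/
def eOne : Fin n → R := fun k => if k.val = 0 then 1 else 0

/-- `Q`: the stabilizer of `e₁` in `E_n(R)`. -/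
def Qstab : Set ((Matrix (Fin n) (Fin n) R)ˣ) :=
  {g | g ∈ ElemGroup R n ∧ Matrix.mulVec g.val (eOne R n) = eOne R n}

/-- The inclusion `Fin (n-1) → Fin n` hitting the indices `2, …, n`
(`0`-indexed: `1, …, n-1`), identifying `U = ⟨e₂, …, e_n⟩` with `Rⁿ⁻¹`. -/
def iota (k : Fin (n - 1)) : Fin n := ⟨k.val + 1, by have := k.isLt; omega⟩

/-- The projection `p : Rⁿ → U = Rⁿ⁻¹` onto the last `n - 1` coordinates. -/
def proj (v : Fin n → R) : Fin (n - 1) → R := fun k => v (iota n k)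

/-- The vector `uᵢ ∈ U`, where `gᵢ e₁ = xᵢ e₁ + uᵢ`. -/
def uVec (g : (Matrix (Fin n) (Fin n) R)ˣ) : Fin (n - 1) → R :=
  proj R n (Matrix.mulVec g.val (eOne R n))

/-- `Φ`: right-`R`-linear functionals on `U` vanishing on all the `uᵢ`. -/
def Phi {m : ℕ} (g : Fin m → (Matrix (Fin n) (Fin n) R)ˣ) :
    Set ((Fin (n - 1) → R) →ₗ[Rᵐᵒᵖ] R) :=
  {φ | ∀ i, φ (uVec R n (g i)) = 0}

/-- The matrix of the transformation `T_φ : v ↦ v + φ(p(v))·e₁`. -/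
def Tmat (φ : (Fin (n - 1) → R) →ₗ[Rᵐᵒᵖ] R) : Matrix (Fin n) (Fin n) R :=
  Matrix.of fun i j =>
    if i = j then 1
    else if h : j.val = 0 then 0
    else if i.val = 0 then φ (Pi.single (⟨j.val - 1, by have := j.isLt; omega⟩ : Fin (n - 1)) 1)
    else 0

/-- `T = {T_φ : φ ∈ Φ}` as a subset of `GL_n(R)`. -/
def Tset {m : ℕ} (g : Fin m → (Matrix (Fin n) (Fin n) R)ˣ) :
    Set ((Matrix (Fin n) (Fin n) R)ˣ) :=
  {t | ∃ φ ∈ Phi R n g, t.val = Tmat R n φ}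

/-!
`T_φ` acts by `v ↦ v + e₁ φ(p v)`. Hence `φ ↦ T_φ` turns addition into multiplication, `T_φ` is
the product of the elementary matrices `e_{1j}(φ(e_j))`, and `T_φ` fixes every `w` with
`φ(p w) = 0`: it fixes `e₁` and, for `φ ∈ Φ`, every `gᵢ e₁`, so `T ⊆ Q ∩ ⋂ gᵢ Q gᵢ⁻¹`.
If `h` fixes `e₁` and every `gᵢ e₁`, then `h T_φ h⁻¹ v = v + e₁ φ(p(h⁻¹ v))`. The functional
`v ↦ φ(p(h⁻¹ v))` kills `ker p = e₁R`, so it equals `ψ ∘ p` for some `ψ`, and `ψ(uᵢ) = φ(uᵢ) = 0`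
because `h⁻¹` fixes `gᵢ e₁`. Thus `h T_φ h⁻¹ = T_ψ ∈ T`.
-/

open Matrix

variable {R n}

theorem LinearMap.map_eq_sum_mul {ι : Type*} [Fintype ι] [DecidableEq ι]
    (φ : (ι → R) →ₗ[Rᵐᵒᵖ] R) (u : ι → R) :
    φ u = ∑ k, φ (Pi.single k 1) * u k := by
  conv_lhs => rw [← Finset.univ_sum_single u, map_sum]
  refine Finset.sum_congr rfl fun k _ => ?_
  rw [← op_smul_eq_mul, ← map_smul, ← Pi.single_smul', op_smul_eq_mul, one_mul]

def mulCoord {ι : Type*} (c : R) (k : ι) : (ι → R) →ₗ[Rᵐᵒᵖ] R where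
  toFun u := c * u k
  map_add' u v := mul_add c (u k) (v k)
  map_smul' r u := (mul_assoc c (u k) r.unop).symm

theorem sum_mulCoord {ι : Type*} [Fintype ι] [DecidableEq ι] (φ : (ι → R) →ₗ[Rᵐᵒᵖ] R) :
    ∑ k, mulCoord (φ (Pi.single k 1)) k = φ :=
  LinearMap.ext fun u => by simp [mulCoord, φ.map_eq_sum_mul u]

section MatrixUnits

variable {m : Type*} [Fintype m]

def Matrix.mulVecOpLin {l : Type*} (A : Matrix l m R) : (m → R) →ₗ[Rᵐᵒᵖ] (l → R) where
  toFun := A.mulVec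
  map_add' := mulVec_add A
  map_smul' c v := mulVec_smul A c v

theorem Matrix.mulVecOpLin_apply {l : Type*} (A : Matrix l m R) (v : m → R) :
    A.mulVecOpLin v = A *ᵥ v := rfl

variable [DecidableEq m]

theorem Units.mulVec_eq_iff (u : (Matrix m m R)ˣ) {v w : m → R} :
    u.val *ᵥ v = w ↔ v = (u⁻¹).val *ᵥ w := by
  constructor
  · rintro rfl
    rw [mulVec_mulVec, Units.inv_mul, one_mulVec]
  · rintro rfl
    rw [mulVec_mulVec, Units.mul_inv, one_mulVec]

theorem Units.inv_mulVec_eq_self {u : (Matrix m m R)ˣ} {w : m → R} (hu : u.val *ᵥ w = w) :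
    (u⁻¹).val *ᵥ w = w :=
  (u.mulVec_eq_iff.mp hu).symm

theorem Units.conj_mulVec_eq_self_iff (g x : (Matrix m m R)ˣ) (w : m → R) :
    (g⁻¹ * x * g).val *ᵥ w = w ↔ x.val *ᵥ (g.val *ᵥ w) = g.val *ᵥ w := by
  rw [Units.val_mul, Units.val_mul, ← mulVec_mulVec, ← mulVec_mulVec, (g⁻¹).mulVec_eq_iff,
    inv_inv]

end MatrixUnits

theorem iota_injective : Function.Injective (iota n) := fun _ _ h =>
  Fin.ext (Nat.succ_injective (Fin.val_eq_of_eq h))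

theorem proj_add (v w : Fin n → R) : proj R n (v + w) = proj R n v + proj R n w := rfl

section NeZero

variable [NeZero n]

variable (n) in
theorem iota_ne_zero (k : Fin (n - 1)) : iota n k ≠ 0 :=
  Fin.ne_of_val_ne (Nat.succ_ne_zero _)

theorem eq_zero_or_eq_iota (i : Fin n) : i = 0 ∨ ∃ k, i = iota n k := by
  rcases eq_or_ne i 0 with hi | hi
  · exact .inl hi
  · have : i.val ≠ 0 := Fin.val_eq_zero_iff.not.mpr hi
    exact .inr ⟨⟨i.val - 1, by omega⟩, Fin.ext (by simp [iota]; omega)⟩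

theorem sum_eq_add_sum_iota {M : Type*} [AddCommMonoid M] (f : Fin n → M) :
    ∑ j, f j = f 0 + ∑ k, f (iota n k) := by
  obtain ⟨m, rfl⟩ : ∃ m, n = m + 1 := ⟨n - 1, (Nat.sub_add_cancel NeZero.one_le).symm⟩
  exact Fin.sum_univ_succ f

theorem eOne_eq_single : eOne R n = Pi.single 0 1 := by
  ext k
  rcases eq_or_ne k 0 with rfl | hk
  · simp [eOne]
  · simp [eOne, hk]

theorem proj_single_zero (c : R) : proj R n (Pi.single 0 c) = 0 := by
  ext k
  simp [proj, iota_ne_zero]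

theorem eq_single_zero_of_proj_eq_zero {v : Fin n → R} (hv : proj R n v = 0) :
    v = Pi.single 0 (v 0) := by
  ext i
  rcases eq_zero_or_eq_iota i with rfl | ⟨k, rfl⟩
  · simp
  · simpa [proj, iota_ne_zero] using congrFun hv k

theorem exists_comp_proj (χ : (Fin n → R) →ₗ[Rᵐᵒᵖ] R) (hχ : ∀ c, χ (Pi.single 0 c) = 0) :
    ∃ ψ : (Fin (n - 1) → R) →ₗ[Rᵐᵒᵖ] R, ∀ v, ψ (proj R n v) = χ v := by
  let p := LinearMap.funLeft Rᵐᵒᵖ R (iota n)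
  have hp : Function.Surjective p := LinearMap.funLeft_surjective_of_injective _ _ _ iota_injective
  have hker : LinearMap.ker p ≤ LinearMap.ker χ := fun v hv => by
    rw [LinearMap.mem_ker, eq_single_zero_of_proj_eq_zero hv]
    exact hχ _
  refine ⟨(LinearMap.ker p).liftQ χ hker ∘ₗ (p.quotKerEquivOfSurjective hp).symm, fun v => ?_⟩
  rw [show proj R n v = p v from rfl, LinearMap.comp_apply, LinearEquiv.coe_coe,
    (p.quotKerEquivOfSurjective hp).symm_apply_eq.mpr (p.quotKerEquivOfSurjective_apply_mk hp v).symm]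
  rfl

theorem mulVec_single_zero_of_mulVec_eOne {A : Matrix (Fin n) (Fin n) R}
    (hA : A *ᵥ eOne R n = eOne R n) (c : R) : A *ᵥ Pi.single 0 c = Pi.single 0 c := by
  have hc : Pi.single (0 : Fin n) c = MulOpposite.op c • eOne R n := by
    rw [eOne_eq_single, ← Pi.single_smul', op_smul_eq_mul, one_mul]
  rw [hc, mulVec_smul, hA]

theorem Tmat_apply_zero_right (φ : (Fin (n - 1) → R) →ₗ[Rᵐᵒᵖ] R) (i : Fin n) :
    Tmat R n φ i 0 = if i = 0 then 1 else 0 := by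
  simp [Tmat]

theorem Tmat_apply_iota (φ : (Fin (n - 1) → R) →ₗ[Rᵐᵒᵖ] R) (i : Fin n) (k : Fin (n - 1)) :
    Tmat R n φ i (iota n k) =
      if i = iota n k then 1 else if i = 0 then φ (Pi.single k 1) else 0 := by
  simp only [Tmat, of_apply, iota, Nat.add_one_ne_zero, dite_false, Nat.add_sub_cancel, Fin.eta]
  simp only [Fin.val_eq_zero_iff]
  congr

theorem Tmat_mulVec (φ : (Fin (n - 1) → R) →ₗ[Rᵐᵒᵖ] R) (v : Fin n → R) :
    Tmat R n φ *ᵥ v = v + Pi.single 0 (φ (proj R n v)) := by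
  ext i
  simp only [mulVec, dotProduct, sum_eq_add_sum_iota, Tmat_apply_zero_right, Tmat_apply_iota,
    φ.map_eq_sum_mul (proj R n v), proj, Pi.add_apply, Pi.single_apply]
  rcases eq_zero_or_eq_iota i with rfl | ⟨k, rfl⟩
  · simp [(iota_ne_zero n _).symm]
  · simp [iota_ne_zero, iota_injective.eq_iff]

theorem Tmat_mulVec_eq_self {φ : (Fin (n - 1) → R) →ₗ[Rᵐᵒᵖ] R} {v : Fin n → R}
    (h : φ (proj R n v) = 0) : Tmat R n φ *ᵥ v = v := by
  rw [Tmat_mulVec, h, Pi.single_zero, add_zero]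

theorem Tmat_zero : Tmat R n 0 = 1 :=
  ext_iff_mulVec.mpr fun v => by
    rw [Tmat_mulVec, LinearMap.zero_apply, Pi.single_zero, add_zero, one_mulVec]

theorem Tmat_add (φ ψ : (Fin (n - 1) → R) →ₗ[Rᵐᵒᵖ] R) :
    Tmat R n (φ + ψ) = Tmat R n φ * Tmat R n ψ :=
  ext_iff_mulVec.mpr fun v => by
    rw [← mulVec_mulVec, Tmat_mulVec, Tmat_mulVec, Tmat_mulVec, proj_add, proj_single_zero,
      add_zero, LinearMap.add_apply, Pi.single_add]
    abel

theorem Tmat_mulCoord (c : R) (k : Fin (n - 1)) :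
    Tmat R n (mulCoord c k) = 1 + single 0 (iota n k) c :=
  ext_iff_mulVec.mpr fun v => by
    rw [Tmat_mulVec, add_mulVec, one_mulVec, single_mulVec]
    rfl

variable (R n) in
def Tunit (φ : (Fin (n - 1) → R) →ₗ[Rᵐᵒᵖ] R) : (Matrix (Fin n) (Fin n) R)ˣ where
  val := Tmat R n φ
  inv := Tmat R n (-φ)
  val_inv := by rw [← Tmat_add, add_neg_cancel, Tmat_zero]
  inv_val := by rw [← Tmat_add, neg_add_cancel, Tmat_zero]

theorem Tunit_val (φ : (Fin (n - 1) → R) →ₗ[Rᵐᵒᵖ] R) : (Tunit R n φ).val = Tmat R n φ := rfl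

theorem Tunit_zero : Tunit R n 0 = 1 := Units.ext Tmat_zero

theorem Tunit_add (φ ψ : (Fin (n - 1) → R) →ₗ[Rᵐᵒᵖ] R) :
    Tunit R n (φ + ψ) = Tunit R n φ * Tunit R n ψ :=
  Units.ext (Tmat_add φ ψ)

theorem Tunit_sub (φ ψ : (Fin (n - 1) → R) →ₗ[Rᵐᵒᵖ] R) :
    Tunit R n (φ - ψ) = Tunit R n φ * (Tunit R n ψ)⁻¹ := by
  rw [sub_eq_add_neg, Tunit_add]
  exact congrArg _ (Units.ext rfl)

theorem Tunit_mem_ElemGroup (φ : (Fin (n - 1) → R) →ₗ[Rᵐᵒᵖ] R) : Tunit R n φ ∈ ElemGroup R n := by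
  rw [← sum_mulCoord φ]
  refine Finset.sum_induction _ (fun ψ => Tunit R n ψ ∈ ElemGroup R n)
    (fun a b ha hb => by rw [Tunit_add]; exact mul_mem ha hb)
    (by rw [Tunit_zero]; exact one_mem _) fun k _ => ?_
  exact Subgroup.subset_closure
    ⟨(0 : Fin n), iota n k, _, (iota_ne_zero n k).symm, Tmat_mulCoord _ _⟩

theorem exists_conj_Tunit {h : (Matrix (Fin n) (Fin n) R)ˣ} (hh : h.val *ᵥ eOne R n = eOne R n)
    (φ : (Fin (n - 1) → R) →ₗ[Rᵐᵒᵖ] R) :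
    ∃ ψ : (Fin (n - 1) → R) →ₗ[Rᵐᵒᵖ] R,
      (∀ v, ψ (proj R n v) = φ (proj R n ((h⁻¹).val *ᵥ v))) ∧
      h * Tunit R n φ * h⁻¹ = Tunit R n ψ := by
  obtain ⟨ψ, hψ⟩ := exists_comp_proj
    (φ ∘ₗ LinearMap.funLeft Rᵐᵒᵖ R (iota n) ∘ₗ (h⁻¹).val.mulVecOpLin) fun c => by
      simp only [LinearMap.comp_apply, mulVecOpLin_apply,
        mulVec_single_zero_of_mulVec_eOne (Units.inv_mulVec_eq_self hh)]
      exact (congrArg φ (proj_single_zero c)).trans (map_zero φ)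
  refine ⟨ψ, hψ, Units.ext (ext_iff_mulVec.mpr fun v => ?_)⟩
  rw [Units.val_mul, Units.val_mul, ← mulVec_mulVec, ← mulVec_mulVec, Tunit_val, Tunit_val,
    Tmat_mulVec, mulVec_add, mulVec_mulVec, Units.mul_inv, one_mulVec,
    mulVec_single_zero_of_mulVec_eOne hh, Tmat_mulVec, hψ]
  rfl

theorem Tset_eq_image {m : ℕ} (g : Fin m → (Matrix (Fin n) (Fin n) R)ˣ) :
    Tset R n g = Tunit R n '' Phi R n g := by
  ext t
  exact ⟨fun ⟨φ, hφ, ht⟩ => ⟨φ, hφ, Units.ext ht.symm⟩,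
    fun ⟨φ, hφ, ht⟩ => ⟨φ, hφ, congrArg Units.val ht.symm⟩⟩

theorem Tset_subset_inter {m : ℕ} (g : Fin m → (Matrix (Fin n) (Fin n) R)ˣ)
    (hg : ∀ i, g i ∈ ElemGroup R n) :
    Tset R n g ⊆ Qstab R n ∩ ⋂ i, {x | (g i)⁻¹ * x * g i ∈ Qstab R n} := by
  rw [Tset_eq_image]
  rintro _ ⟨φ, hφ, rfl⟩
  have hfix : φ (proj R n (eOne R n)) = 0 := by rw [eOne_eq_single, proj_single_zero, map_zero]
  exact ⟨⟨Tunit_mem_ElemGroup φ, Tmat_mulVec_eq_self hfix⟩, Set.mem_iInter.mpr fun i =>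
    ⟨mul_mem (mul_mem (inv_mem (hg i)) (Tunit_mem_ElemGroup φ)) (hg i),
      (Units.conj_mulVec_eq_self_iff _ _ _).mpr (Tmat_mulVec_eq_self (hφ i))⟩⟩

theorem conj_mem_Tset {m : ℕ} {g : Fin m → (Matrix (Fin n) (Fin n) R)ˣ}
    {h : (Matrix (Fin n) (Fin n) R)ˣ}
    (hh : h ∈ Qstab R n ∩ ⋂ i, {x | (g i)⁻¹ * x * g i ∈ Qstab R n})
    {t : (Matrix (Fin n) (Fin n) R)ˣ} (ht : t ∈ Tset R n g) : h * t * h⁻¹ ∈ Tset R n g := by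
  rw [Tset_eq_image] at ht ⊢
  obtain ⟨φ, hφ, rfl⟩ := ht
  obtain ⟨⟨-, he⟩, hconj⟩ := hh
  obtain ⟨ψ, hψ, hconj_eq⟩ := exists_conj_Tunit he φ
  refine ⟨ψ, fun i => ?_, hconj_eq.symm⟩
  have hgi : (h⁻¹).val *ᵥ ((g i).val *ᵥ eOne R n) = (g i).val *ᵥ eOne R n :=
    Units.inv_mulVec_eq_self
      ((Units.conj_mulVec_eq_self_iff _ _ _).mp (Set.mem_iInter.mp hconj i).2)
  rw [uVec, hψ, hgi]
  exact hφ i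

end NeZero

theorem Tset_normal_in_intersection_general (hn : 3 ≤ n)
    (g : Fin (n - 2) → (Matrix (Fin n) (Fin n) R)ˣ)
    (hg : ∀ i, g i ∈ ElemGroup R n) :
    Tset R n g ⊆ (Qstab R n ∩ ⋂ i, {x | (g i)⁻¹ * x * g i ∈ Qstab R n}) ∧
    (1 : (Matrix (Fin n) (Fin n) R)ˣ) ∈ Tset R n g ∧
    (∀ a ∈ Tset R n g, ∀ b ∈ Tset R n g, a * b⁻¹ ∈ Tset R n g) ∧
    (∀ h ∈ (Qstab R n ∩ ⋂ i, {x | (g i)⁻¹ * x * g i ∈ Qstab R n}),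
      ∀ t ∈ Tset R n g, h * t * h⁻¹ ∈ Tset R n g) := by
  have : NeZero n := ⟨by omega⟩
  refine ⟨Tset_subset_inter g hg, ?_, ?_, fun h hh t ht => conj_mem_Tset hh ht⟩
  · rw [Tset_eq_image]
    exact ⟨0, fun i => LinearMap.zero_apply _, Tunit_zero⟩
  · simp only [Tset_eq_image]
    rintro _ ⟨φ, hφ, rfl⟩ _ ⟨ψ, hψ, rfl⟩
    exact ⟨φ - ψ, fun i => by rw [LinearMap.sub_apply, hφ i, hψ i, sub_zero], Tunit_sub φ ψ⟩

/-- For `n ≥ 3`, `R` an infinite `(n-1)`-rigid ring and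
`g₁, …, g_{n-2} ∈ E_n(R)`, the set `T = {T_φ : φ ∈ Φ}` is a normal subgroup of
`Q ∩ g₁Qg₁⁻¹ ∩ ⋯ ∩ g_{n-2}Qg_{n-2}⁻¹`. -/
theorem Tset_normal_in_intersection [Infinite R] (hn : 3 ≤ n)
    (hR : ∀ f : (Fin (n - 1) → R) →ₗ[Rᵐᵒᵖ] (Fin (n - 1 - 1) → R),
      (LinearMap.ker f : Set (Fin (n - 1) → R)).Infinite)
    (g : Fin (n - 2) → (Matrix (Fin n) (Fin n) R)ˣ)
    (hg : ∀ i, g i ∈ ElemGroup R n) :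
    Tset R n g ⊆ (Qstab R n ∩ ⋂ i, {x | (g i)⁻¹ * x * g i ∈ Qstab R n}) ∧
    (1 : (Matrix (Fin n) (Fin n) R)ˣ) ∈ Tset R n g ∧
    (∀ a ∈ Tset R n g, ∀ b ∈ Tset R n g, a * b⁻¹ ∈ Tset R n g) ∧
    (∀ h ∈ (Qstab R n ∩ ⋂ i, {x | (g i)⁻¹ * x * g i ∈ Qstab R n}),
      ∀ t ∈ Tset R n g, h * t * h⁻¹ ∈ Tset R n g) :=
  Tset_normal_in_intersection_general hn g hg
end
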